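/- arXiv:2601.08553 — 2 statements merged into one kernel-verified Lean document; each statement's English description precedes it below -/
import Mathlib

section
/- Let C ∈ ℝ^{s×n}, P = I - C†C, and Q = A^T J A be symmetric positive definite for A ∈ ℝ^{m×n} and a signature matrix J. Then (PQP)†QP = P. -/
/-!
`P = I - C†C` is an orthogonal projector, and for `M = PQP` the difference `N = P - M†M`
satisfies `PN = N` and `MN = 0`. Hence `NᵀQN = NᵀMN = 0`, and positive definiteness of `Q`
forces `N = 0`, i.e. `M†M = P`. Since the range of `M` lies in that of `P`, also `M†P = M†`,
so `M†QP = M†PQP = M†M = P`.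
-/

open Matrix

/-- `Cd` is the Moore–Penrose inverse of `C` (the four Penrose equations). -/
def IsMoorePenrose {m n : Type*} [Fintype m] [Fintype n]
    (C : Matrix m n ℝ) (Cd : Matrix n m ℝ) : Prop :=
  C * Cd * C = C ∧ Cd * C * Cd = Cd ∧ (C * Cd)ᵀ = C * Cd ∧ (Cd * C)ᵀ = Cd * C

/-- The signature matrix `J = diag(I_p, -I_q)`. -/
def sig (p q : ℕ) : Matrix (Fin p ⊕ Fin q) (Fin p ⊕ Fin q) ℝ :=
  Matrix.fromBlocks 1 0 0 (-1)

lemma Matrix.PosDef.eq_zero_of_conjTranspose_mul_mul_eq_zero {R m n : Type*} [CommRing R]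
    [PartialOrder R] [StarRing R] [Fintype m] [Fintype n]
    {Q : Matrix n n R} {N : Matrix n m R} (hQ : Q.PosDef) (hN : Nᴴ * Q * N = 0) : N = 0 := by
  refine ext_iff_mulVec.mpr fun v => ?_
  by_contra hv
  have hpos := hQ.dotProduct_mulVec_pos (x := N *ᵥ v) (by simpa using hv)
  have hquad : star (N *ᵥ v) ⬝ᵥ (Q *ᵥ (N *ᵥ v)) = star v ⬝ᵥ ((Nᴴ * Q * N) *ᵥ v) := by
    rw [star_mulVec, ← dotProduct_mulVec, mulVec_mulVec, mulVec_mulVec, Matrix.mul_assoc]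
  rw [hquad, hN, zero_mulVec, dotProduct_zero] at hpos
  exact lt_irrefl 0 hpos

namespace IsMoorePenrose

variable {m n : Type*} [Fintype m] [Fintype n] {M : Matrix m n ℝ} {Md : Matrix n m ℝ}

lemma isIdempotentElem_pinv_mul (h : IsMoorePenrose M Md) : IsIdempotentElem (Md * M) := by
  rw [IsIdempotentElem, ← Matrix.mul_assoc, h.2.1]

lemma mul_pinv_mul_of_mul_eq (h : IsMoorePenrose M Md) {P : Matrix n n ℝ} (hP : Pᵀ = P)
    (hMP : M * P = M) : P * (Md * M) = Md * M := by
  rw [← hP, ← h.2.2.2, ← transpose_mul, Matrix.mul_assoc, hMP]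

lemma pinv_mul_of_mul_eq (h : IsMoorePenrose M Md) {P : Matrix m m ℝ} (hP : Pᵀ = P)
    (hPM : P * M = M) : Md * P = Md := by
  have hMMd : M * Md * P = M * Md := by
    rw [← hP, ← h.2.2.1, ← transpose_mul, ← Matrix.mul_assoc, hPM]
  calc Md * P = Md * M * Md * P := by rw [h.2.1]
    _ = Md * (M * Md * P) := by simp only [Matrix.mul_assoc]
    _ = Md := by rw [hMMd, ← Matrix.mul_assoc, h.2.1]

end IsMoorePenrose

section Compression

variable {n : Type*} [Fintype n] {P Q Md : Matrix n n ℝ}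

lemma pinv_mul_compression_eq (hP : IsIdempotentElem P) (hPt : Pᵀ = P) (hQ : Q.PosDef)
    (hMd : IsMoorePenrose (P * Q * P) Md) : Md * (P * Q * P) = P := by
  set M := P * Q * P
  have hMP : M * P = M := by simp only [M, Matrix.mul_assoc, hP.eq]
  set N := P - Md * M
  have hPN : P * N = N := by
    rw [Matrix.mul_sub, hP.eq, hMd.mul_pinv_mul_of_mul_eq hPt hMP]
  have hMN : M * N = 0 := by
    rw [Matrix.mul_sub, hMP, ← Matrix.mul_assoc, hMd.1, sub_self]
  have hNQN : Nᴴ * Q * N = 0 := by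
    rw [conjTranspose_eq_transpose_of_trivial, ← hPN, transpose_mul, hPt]
    simp only [M, Matrix.mul_assoc] at hMN ⊢
    rw [hMN, Matrix.mul_zero]
  exact (sub_eq_zero.mp (hQ.eq_zero_of_conjTranspose_mul_mul_eq_zero hNQN)).symm

lemma pinv_compression_mul_mul_eq (hP : IsIdempotentElem P) (hPt : Pᵀ = P) (hQ : Q.PosDef)
    (hMd : IsMoorePenrose (P * Q * P) Md) : Md * Q * P = P := by
  have hPM : P * (P * Q * P) = P * Q * P := by simp only [← Matrix.mul_assoc, hP.eq]
  calc Md * Q * P = Md * P * Q * P := by rw [hMd.pinv_mul_of_mul_eq hPt hPM]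
    _ = Md * (P * Q * P) := by simp only [Matrix.mul_assoc]
    _ = P := pinv_mul_compression_eq hP hPt hQ hMd

end Compression

/-- With `P = I - C†C`, `Q = AᵀJA` positive definite, `(PQP)† Q P = P`. -/
theorem pqp_pinv_QP {p q s n : ℕ}
    (A : Matrix (Fin p ⊕ Fin q) (Fin n) ℝ)
    (C : Matrix (Fin s) (Fin n) ℝ) (Cd : Matrix (Fin n) (Fin s) ℝ)
    (hC : IsMoorePenrose C Cd)
    (hQ : (Aᵀ * sig p q * A).PosDef)
    (Md : Matrix (Fin n) (Fin n) ℝ)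
    (hMd : IsMoorePenrose
      ((1 - Cd * C) * (Aᵀ * sig p q * A) * (1 - Cd * C)) Md) :
    Md * (Aᵀ * sig p q * A) * (1 - Cd * C) = 1 - Cd * C := by
  have hP : IsIdempotentElem (1 - Cd * C) := hC.isIdempotentElem_pinv_mul.one_sub
  have hPt : (1 - Cd * C)ᵀ = 1 - Cd * C := by
    rw [transpose_sub, transpose_one, hC.2.2.2]
  exact pinv_compression_mul_mul_eq hP hPt hQ hMd
end

section
/- Let F: S → ℝ^{m×p} be differentiable on an open subset S of ℝ^{n×q} with rank(F(X)) constant on S. Then the Fréchet differential of the Moore–Penrose inverse satisfies dF† = -F† dF F† + F† F†^T dF^T (I_m - FF†) + (I_p - F†F) dF^T F†^T F†. -/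
open Matrix
open scoped Matrix.Norms.L2Operator

/-!
Wedin's identity
`B† - A† = -B† (B - A) A† + B† B†ᵀ (B - A)ᵀ (1 - A A†) + (1 - B† B) (B - A)ᵀ A†ᵀ A†`
holds for any two matrices and their Moore–Penrose inverses. With `A = F X`, `B = F Y` it writes
`F† Y - F† X` as a linear map, depending on `Y`, applied to `F Y - F X`; at `Y = X` that map is the
claimed differential, so by the chain rule in Carathéodory's form it suffices that the map depends
continuously on `Y`, i.e. that `F†` is continuous at `X`. By the same identity this follows once
`‖F† Y‖` stays bounded near `X`, and that is where constant rank enters: if `rank B = rank A` and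
`‖A†‖ ‖B - A‖ < 1`, then `B† B` maps the range of `A† A` onto its own range, which yields
`(1 - ‖A†‖ ‖B - A‖) ‖B†‖ ≤ ‖A†‖`.
-/

open Filter Topology Asymptotics

theorem HasFDerivAt.of_sub_eq_clm_apply {𝕜 E F G : Type*} [NontriviallyNormedField 𝕜]
    [NormedAddCommGroup E] [NormedSpace 𝕜 E] [NormedAddCommGroup F] [NormedSpace 𝕜 F]
    [NormedAddCommGroup G] [NormedSpace 𝕜 G] {f : E → G} {g : E → F} {g' : E →L[𝕜] F}
    {T : E → F →L[𝕜] G} {x : E} (hg : HasFDerivAt g g' x) (hT : ContinuousAt T x)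
    (hfg : ∀ᶠ y in 𝓝 x, f y - f x = T y (g y - g x)) :
    HasFDerivAt f ((T x).comp g') x := by
  have hsplit : ∀ᶠ y in 𝓝 x, (T y - T x) (g y - g x) + T x (g y - g x - g' (y - x))
      = f y - f x - (T x).comp g' (y - x) := by
    filter_upwards [hfg] with y hy
    simp only [hy, _root_.sub_apply, map_sub, ContinuousLinearMap.comp_apply]
    abel
  have hT_sub : (fun y => T y - T x) =o[𝓝 x] fun _ => (1 : ℝ) :=
    (isLittleO_one_iff ℝ).mpr (tendsto_sub_nhds_zero_iff.mpr hT)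
  have hfirst : (fun y => (T y - T x) (g y - g x)) =o[𝓝 x] fun y => y - x := by
    refine isBoundedBilinearMap_apply.isBigO_comp.trans_isLittleO ?_
    simpa using hT_sub.norm_left.mul_isBigO hg.isBigO_sub.norm_norm
  have hsecond : (fun y => T x (g y - g x - g' (y - x))) =o[𝓝 x] fun y => y - x :=
    ((T x).isBigO_comp _ _).trans_isLittleO hg.isLittleO
  exact .of_isLittleO <| (hfirst.add hsecond).congr' hsplit .rfl

namespace Matrix

variable {l m n : Type*} [Fintype m] [Fintype n]

theorem exists_mul_mul_eq_of_rank_le {K : Type*} [Field K] [DecidableEq m]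
    {M : Matrix l m K} {N : Matrix m n K} (h : M.rank ≤ (M * N).rank) :
    ∃ Z : Matrix n m K, M * N * Z = M := by
  have hrange : LinearMap.range (M * N).mulVecLin = LinearMap.range M.mulVecLin := by
    refine Submodule.eq_of_le_of_finrank_le ?_ h
    rw [mulVecLin_mul, LinearMap.range_comp]
    exact LinearMap.map_le_range
  have hcol : ∀ j, ∃ z, (M * N) *ᵥ z = M *ᵥ Pi.single j 1 := fun j => by
    simpa [← hrange] using LinearMap.mem_range_self M.mulVecLin (Pi.single j 1)
  choose z hz using hcol
  refine ⟨(of z)ᵀ, ext fun i j => ?_⟩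
  have hzji := congrFun (hz j) i
  rw [mulVec_single_one] at hzji
  simpa [mulVec, dotProduct, mul_apply] using hzji

variable [DecidableEq m] [DecidableEq n]

theorem l2_opNorm_transpose (A : Matrix m n ℝ) : ‖Aᵀ‖ = ‖A‖ := by
  rw [← conjTranspose_eq_transpose_of_trivial, l2_opNorm_conjTranspose]

theorem l2_opNorm_mul_le_of_le [Fintype l] {A : Matrix l m ℝ} {B : Matrix m n ℝ} {a b : ℝ}
    (ha : ‖A‖ ≤ a) (hb : ‖B‖ ≤ b) : ‖A * B‖ ≤ a * b :=
  (l2_opNorm_mul A B).trans (mul_le_mul ha hb (norm_nonneg B) ((norm_nonneg A).trans ha))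

/-- `A, Ad` play the roles of `A, A†` and `B, Bd` those of `B, B†` in Wedin's identity. -/
noncomputable def wedinMap (A : Matrix m n ℝ) (Ad : Matrix n m ℝ)
    (B : Matrix m n ℝ) (Bd : Matrix n m ℝ) : Matrix m n ℝ →L[ℝ] Matrix n m ℝ :=
  LinearMap.toContinuousLinearMap
    { toFun := fun E =>
        -(Bd * E * Ad) + Bd * Bdᵀ * Eᵀ * (1 - A * Ad) + (1 - Bd * B) * Eᵀ * Adᵀ * Ad
      map_add' := fun E₁ E₂ => by
        simp only [transpose_add, Matrix.mul_add, Matrix.add_mul, neg_add]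
        abel
      map_smul' := fun c E => by
        simp only [transpose_smul, Matrix.mul_smul, Matrix.smul_mul, RingHom.id_apply, smul_add,
          smul_neg] }

theorem wedinMap_apply (A : Matrix m n ℝ) (Ad : Matrix n m ℝ) (B : Matrix m n ℝ)
    (Bd : Matrix n m ℝ) (E : Matrix m n ℝ) :
    wedinMap A Ad B Bd E
      = -(Bd * E * Ad) + Bd * Bdᵀ * Eᵀ * (1 - A * Ad) + (1 - Bd * B) * Eᵀ * Adᵀ * Ad :=
  rfl

theorem continuous_wedinMap (A : Matrix m n ℝ) (Ad : Matrix n m ℝ) :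
    Continuous fun p : Matrix m n ℝ × Matrix n m ℝ => wedinMap A Ad p.1 p.2 := by
  refine continuous_clm_apply.mpr fun E => ?_
  simp only [wedinMap_apply]
  fun_prop

end Matrix

namespace IsMoorePenrose

variable {m n : Type*} [Fintype m] [Fintype n] {A B : Matrix m n ℝ} {Ad Bd : Matrix n m ℝ}

theorem isStarProjection_mul_pinv (h : IsMoorePenrose A Ad) : IsStarProjection (A * Ad) where
  isIdempotentElem := by rw [IsIdempotentElem, ← Matrix.mul_assoc, h.1]
  isSelfAdjoint := by
    rw [IsSelfAdjoint, star_eq_conjTranspose, conjTranspose_eq_transpose_of_trivial, h.2.2.1]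

theorem isStarProjection_pinv_mul (h : IsMoorePenrose A Ad) : IsStarProjection (Ad * A) where
  isIdempotentElem := by rw [IsIdempotentElem, ← Matrix.mul_assoc, h.2.1]
  isSelfAdjoint := by
    rw [IsSelfAdjoint, star_eq_conjTranspose, conjTranspose_eq_transpose_of_trivial, h.2.2.2]

theorem rank_pinv_mul (h : IsMoorePenrose A Ad) : (Ad * A).rank = A.rank :=
  le_antisymm (rank_mul_le_right Ad A) <| by
    calc A.rank = (A * (Ad * A)).rank := by rw [← Matrix.mul_assoc, h.1]
      _ ≤ (Ad * A).rank := rank_mul_le_right _ _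

variable [DecidableEq m] [DecidableEq n]

theorem sub_eq_wedinMap (hA : IsMoorePenrose A Ad) (hB : IsMoorePenrose B Bd) :
    Bd - Ad = wedinMap A Ad B Bd (B - A) := by
  obtain ⟨hA1, hA2, hA3, hA4⟩ := hA
  obtain ⟨hB1, hB2, hB3, hB4⟩ := hB
  have hBd : Bd * Bdᵀ * Bᵀ = Bd := by
    rw [Matrix.mul_assoc, ← transpose_mul, hB3, ← Matrix.mul_assoc, hB2]
  have hAd : Aᵀ * Adᵀ * Ad = Ad := by rw [← transpose_mul, hA4, hA2]
  have hAT : Aᵀ * (A * Ad) = Aᵀ := by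
    conv_lhs => rw [← hA3, ← transpose_mul, hA1]
  have hBT : Bd * B * Bᵀ = Bᵀ := by
    conv_lhs => rw [← hB4, ← transpose_mul, ← Matrix.mul_assoc, hB1]
  rw [wedinMap_apply]
  simp only [transpose_sub, Matrix.mul_sub, Matrix.sub_mul, Matrix.mul_one, Matrix.one_mul]
  rw [hBd, hBT, hAd, Matrix.mul_assoc (Bd * Bdᵀ) Aᵀ, hAT, ← Matrix.mul_assoc Bd A Ad,
    Matrix.mul_assoc (Bd * B * Aᵀ), Matrix.mul_assoc (Bd * B), ← Matrix.mul_assoc Aᵀ, hAd]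
  abel

theorem norm_pinv_sub_le (hA : IsMoorePenrose A Ad) (hB : IsMoorePenrose B Bd) :
    ‖Bd - Ad‖ ≤ (‖Bd‖ * ‖Ad‖ + ‖Bd‖ ^ 2 + ‖Ad‖ ^ 2) * ‖B - A‖ := by
  have hP : ‖1 - A * Ad‖ ≤ 1 := hA.isStarProjection_mul_pinv.one_sub.norm_le
  have hQ : ‖1 - Bd * B‖ ≤ 1 := hB.isStarProjection_pinv_mul.one_sub.norm_le
  rw [sub_eq_wedinMap hA hB, wedinMap_apply]
  calc _ ≤ ‖Bd * (B - A) * Ad‖ + ‖Bd * Bdᵀ * (B - A)ᵀ * (1 - A * Ad)‖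
        + ‖(1 - Bd * B) * (B - A)ᵀ * Adᵀ * Ad‖ := by
        simpa only [norm_neg] using norm_add₃_le (a := -(Bd * (B - A) * Ad))
    _ ≤ ‖Bd‖ * ‖B - A‖ * ‖Ad‖ + ‖Bd‖ * ‖Bd‖ * ‖B - A‖ * 1 + 1 * ‖B - A‖ * ‖Ad‖ * ‖Ad‖ := by
        gcongr ?_ + ?_ + ?_
        · exact l2_opNorm_mul_le_of_le (l2_opNorm_mul _ _) le_rfl
        · refine l2_opNorm_mul_le_of_le (l2_opNorm_mul_le_of_le ?_ ?_) hP
          · exact l2_opNorm_mul_le_of_le le_rfl (l2_opNorm_transpose Bd).le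
          · exact (l2_opNorm_transpose _).le
        · refine l2_opNorm_mul_le_of_le (l2_opNorm_mul_le_of_le ?_ ?_) le_rfl
          · exact l2_opNorm_mul_le_of_le hQ (l2_opNorm_transpose _).le
          · exact (l2_opNorm_transpose Ad).le
    _ = _ := by ring

theorem rank_pinv_mul_le_rank_mul (hA : IsMoorePenrose A Ad) (hB : IsMoorePenrose B Bd)
    (hsmall : ‖Ad‖ * ‖B - A‖ < 1) : (Ad * A).rank ≤ (Bd * B * (Ad * A)).rank := by
  have hT : IsUnit (1 + Ad * (B - A)) := by
    have : ‖-(Ad * (B - A))‖ < 1 := by rw [norm_neg]; exact (l2_opNorm_mul _ _).trans_lt hsmall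
    simpa only [Units.val_oneSub, sub_neg_eq_add] using (Units.oneSub _ this).isUnit
  have hTQ : (1 + Ad * (B - A)) * (Ad * A) = Ad * B * (Bd * B * (Ad * A)) := by
    rw [← Matrix.mul_assoc (Ad * B), Matrix.mul_assoc Ad B, ← Matrix.mul_assoc B, hB.1,
      Matrix.add_mul, Matrix.one_mul, Matrix.mul_sub, Matrix.sub_mul, ← Matrix.mul_assoc,
      hA.isStarProjection_pinv_mul.isIdempotentElem.eq]
    abel
  calc (Ad * A).rank = ((1 + Ad * (B - A)) * (Ad * A)).rank :=
        (rank_mul_eq_right_of_isUnit_det _ _ ((isUnit_iff_isUnit_det _).mp hT)).symm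
    _ ≤ (Bd * B * (Ad * A)).rank := hTQ ▸ rank_mul_le_right _ _

theorem norm_pinv_le_of_rank_eq (hA : IsMoorePenrose A Ad) (hB : IsMoorePenrose B Bd)
    (hr : A.rank = B.rank) (hsmall : ‖Ad‖ * ‖B - A‖ < 1) :
    (1 - ‖Ad‖ * ‖B - A‖) * ‖Bd‖ ≤ ‖Ad‖ := by
  obtain ⟨Z, hZ⟩ : ∃ Z, Bd * B * (Ad * A) * Z = Bd * B := by
    refine exists_mul_mul_eq_of_rank_le ?_
    rw [hB.rank_pinv_mul, ← hr, ← hA.rank_pinv_mul]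
    exact rank_pinv_mul_le_rank_mul hA hB hsmall
  set N := Ad * A * Z * Bd
  have hBdN : Bd * B * N = Bd := by
    calc Bd * B * N = Bd * B * (Ad * A) * Z * Bd := by simp only [N, Matrix.mul_assoc]
      _ = Bd := by rw [hZ, hB.2.1]
  have hN : Ad * (A * N) = N := by
    simp only [N, ← Matrix.mul_assoc, hA.2.1]
  clear_value N
  have hAN : A * N = B * Bd - (B - A) * N := by
    have hBN : B * N = B * Bd := by
      conv_rhs => rw [← hBdN, ← Matrix.mul_assoc, ← Matrix.mul_assoc, hB.1]
    rw [Matrix.sub_mul, ← hBN, sub_sub_cancel]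
  have hN_le : ‖N‖ ≤ ‖Ad‖ * (1 + ‖B - A‖ * ‖N‖) := by
    calc ‖N‖ = ‖Ad * (A * N)‖ := by rw [hN]
      _ ≤ ‖Ad‖ * (1 + ‖B - A‖ * ‖N‖) := by
        refine l2_opNorm_mul_le_of_le le_rfl ?_
        rw [hAN]
        exact (norm_sub_le _ _).trans
          (add_le_add hB.isStarProjection_mul_pinv.norm_le (l2_opNorm_mul _ _))
  have hBd_le : ‖Bd‖ ≤ ‖N‖ := by
    calc ‖Bd‖ = ‖Bd * B * N‖ := by rw [hBdN]
      _ ≤ 1 * ‖N‖ := l2_opNorm_mul_le_of_le hB.isStarProjection_pinv_mul.norm_le le_rfl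
      _ = ‖N‖ := one_mul _
  nlinarith [norm_nonneg N, norm_nonneg Ad]

theorem norm_pinv_sub_le_of_rank_eq (hA : IsMoorePenrose A Ad) (hB : IsMoorePenrose B Bd)
    (hr : A.rank = B.rank) (hsmall : ‖Ad‖ * ‖B - A‖ ≤ 1 / 2) :
    ‖Bd - Ad‖ ≤ 7 * ‖Ad‖ ^ 2 * ‖B - A‖ := by
  have hBd : ‖Bd‖ ≤ 2 * ‖Ad‖ := by
    nlinarith [norm_pinv_le_of_rank_eq hA hB hr (hsmall.trans_lt one_half_lt_one), norm_nonneg Bd]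
  calc ‖Bd - Ad‖ ≤ (‖Bd‖ * ‖Ad‖ + ‖Bd‖ ^ 2 + ‖Ad‖ ^ 2) * ‖B - A‖ := norm_pinv_sub_le hA hB
    _ ≤ 7 * ‖Ad‖ ^ 2 * ‖B - A‖ := by gcongr; nlinarith [norm_nonneg Bd, norm_nonneg Ad]

theorem continuousAt_of_rank_eq {α : Type*} [TopologicalSpace α] {F : α → Matrix m n ℝ}
    {Fd : α → Matrix n m ℝ} {x : α} (hx : IsMoorePenrose (F x) (Fd x)) (hF : ContinuousAt F x)
    (hFd : ∀ᶠ y in 𝓝 x, IsMoorePenrose (F y) (Fd y) ∧ (F y).rank = (F x).rank) :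
    ContinuousAt Fd x := by
  have hlim : Tendsto (fun y => ‖F y - F x‖) (𝓝 x) (𝓝 0) :=
    tendsto_iff_norm_sub_tendsto_zero.mp hF
  have hsmall : ∀ᶠ y in 𝓝 x, ‖Fd x‖ * ‖F y - F x‖ ≤ 1 / 2 :=
    (hlim.const_mul ‖Fd x‖).eventually (eventually_le_nhds (by norm_num))
  refine tendsto_iff_norm_sub_tendsto_zero.mpr <|
    squeeze_zero' (Eventually.of_forall fun _ => norm_nonneg _) ?_
      (by simpa using hlim.const_mul (7 * ‖Fd x‖ ^ 2))
  filter_upwards [hFd, hsmall] with y ⟨hy, hrank⟩ hy_small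
  exact norm_pinv_sub_le_of_rank_eq hx hy hrank.symm hy_small

end IsMoorePenrose

theorem pinv_fderiv_general {n q m p : ℕ}
    (S : Set (Matrix (Fin n) (Fin q) ℝ)) (hS : IsOpen S)
    (F : Matrix (Fin n) (Fin q) ℝ → Matrix (Fin m) (Fin p) ℝ)
    (Fd : Matrix (Fin n) (Fin q) ℝ → Matrix (Fin p) (Fin m) ℝ)
    (hFd : ∀ X ∈ S, IsMoorePenrose (F X) (Fd X))
    (hrank : ∀ X ∈ S, ∀ Y ∈ S, (F X).rank = (F Y).rank)
    (X : Matrix (Fin n) (Fin q) ℝ) (hX : X ∈ S)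
    (F' : Matrix (Fin n) (Fin q) ℝ →L[ℝ] Matrix (Fin m) (Fin p) ℝ)
    (hF' : HasFDerivAt F F' X) :
    ∃ G : Matrix (Fin n) (Fin q) ℝ →L[ℝ] Matrix (Fin p) (Fin m) ℝ,
      HasFDerivAt Fd G X ∧
        ∀ dX, G dX =
          -(Fd X * F' dX * Fd X)
            + Fd X * (Fd X)ᵀ * (F' dX)ᵀ * (1 - F X * Fd X)
            + (1 - Fd X * F X) * (F' dX)ᵀ * (Fd X)ᵀ * Fd X := by
  have hS_nhds : ∀ᶠ Y in 𝓝 X, Y ∈ S := hS.mem_nhds hX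
  have hFd_cont : ContinuousAt Fd X :=
    (hFd X hX).continuousAt_of_rank_eq hF'.continuousAt <|
      hS_nhds.mono fun Y hY => ⟨hFd Y hY, hrank Y hY X hX⟩
  refine ⟨(wedinMap (F X) (Fd X) (F X) (Fd X)).comp F', ?_, fun _ => rfl⟩
  refine hF'.of_sub_eq_clm_apply
    ((continuous_wedinMap _ _).continuousAt.comp (hF'.continuousAt.prodMk hFd_cont)) ?_
  filter_upwards [hS_nhds] with Y hY
  exact (hFd X hX).sub_eq_wedinMap (hFd Y hY)

/-- **Differential of the Moore–Penrose inverse under a constant-rank assumption:**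
if `F` is differentiable on an open set `S` and `rank (F X)` is constant on `S`, then the
Moore–Penrose inverse `F†` is differentiable and
`dF† = -F† dF F† + F† F†ᵀ dFᵀ (I - F F†) + (I - F† F) dFᵀ F†ᵀ F†`. -/
theorem pinv_fderiv {n q m p : ℕ}
    (S : Set (Matrix (Fin n) (Fin q) ℝ)) (hS : IsOpen S)
    (F : Matrix (Fin n) (Fin q) ℝ → Matrix (Fin m) (Fin p) ℝ)
    (Fd : Matrix (Fin n) (Fin q) ℝ → Matrix (Fin p) (Fin m) ℝ)
    (hFd : ∀ X ∈ S, IsMoorePenrose (F X) (Fd X))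
    (hdiff : DifferentiableOn ℝ F S)
    (hrank : ∀ X ∈ S, ∀ Y ∈ S, (F X).rank = (F Y).rank)
    (X : Matrix (Fin n) (Fin q) ℝ) (hX : X ∈ S)
    (F' : Matrix (Fin n) (Fin q) ℝ →L[ℝ] Matrix (Fin m) (Fin p) ℝ)
    (hF' : HasFDerivAt F F' X) :
    ∃ G : Matrix (Fin n) (Fin q) ℝ →L[ℝ] Matrix (Fin p) (Fin m) ℝ,
      HasFDerivAt Fd G X ∧
        ∀ dX, G dX =
          -(Fd X * F' dX * Fd X)
            + Fd X * (Fd X)ᵀ * (F' dX)ᵀ * (1 - F X * Fd X)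
            + (1 - Fd X * F X) * (F' dX)ᵀ * (Fd X)ᵀ * Fd X :=
  pinv_fderiv_general S hS F Fd hFd hrank X hX F' hF'
end
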